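/- arXiv:1707.06124 — 2 statements merged into one kernel-verified Lean document; each statement's English description precedes it below -/
import Mathlib

section
/- With the rank-one setup, let z ∈ ℂ with Re z > 0. Then the limit as t → +∞ of (2 cosh t)^{−l(z)} · φ_z(t) exists and equals (Γ(s + n/2) / Γ(n/2)) · c(z), where c(z) is the rank-one Harish-Chandra c-function. (This is the asymptotic behavior at infinity of the spherical function of K-type δ on a rank-one symmetric space.) -/
open Complex Filter Topology

/-- Rising Pochhammer symbol `(a)_n = a (a+1) ⋯ (a+n-1)`. -/
noncomputable def poch (a : ℂ) (n : ℕ) : ℂ := (ascPochhammer ℂ n).eval a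

/-- Gauss hypergeometric series `F(a,b;c;x)`. -/
noncomputable def hypF (a b c x : ℂ) : ℂ :=
  ∑' n : ℕ, poch a n * poch b n / (poch c n * (n.factorial : ℂ)) * x ^ n

/-- `ρ_H = m_α/2 + m_{2α}`. -/
noncomputable def rhoH (mα m2α : ℕ) : ℂ := (mα : ℂ) / 2 + (m2α : ℂ)

/-- `l(z) = z - ρ_H`. -/
noncomputable def lFun (mα m2α : ℕ) (z : ℂ) : ℂ := z - rhoH mα m2α

/-- First hypergeometric parameter `a(z) = (s + r - l(z))/2`. -/
noncomputable def aFun (mα m2α : ℕ) (s r : ℤ) (z : ℂ) : ℂ :=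
  ((s : ℂ) + (r : ℂ) - lFun mα m2α z) / 2

/-- Second hypergeometric parameter `b(z) = (s - r - l(z) + 1 - m_{2α})/2`. -/
noncomputable def bFun (mα m2α : ℕ) (s r : ℤ) (z : ℂ) : ℂ :=
  ((s : ℂ) - (r : ℂ) - lFun mα m2α z + 1 - (m2α : ℂ)) / 2

/-- Third hypergeometric parameter `c₀ = s + (m_α + m_{2α} + 1)/2`. -/
noncomputable def cZero (mα m2α : ℕ) (s : ℤ) : ℂ :=
  (s : ℂ) + ((mα : ℂ) + (m2α : ℂ) + 1) / 2

/-- The constant `c_z` in front of the spherical function. -/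
noncomputable def cCoef (mα m2α : ℕ) (s r : ℤ) (z : ℂ) : ℂ :=
  (Complex.Gamma ((z + (mα : ℂ) / 2 + (m2α : ℂ) + (s : ℂ) + (r : ℂ)) / 2) /
      Complex.Gamma ((z + (mα : ℂ) / 2 + (m2α : ℂ)) / 2)) *
    (Complex.Gamma ((z + (mα : ℂ) / 2 + 1 + (s : ℂ) - (r : ℂ)) / 2) /
      Complex.Gamma ((z + (mα : ℂ) / 2 + 1) / 2))

/-- The spherical function
`φ_z(t) = c_z (tanh t)^s (cosh t)^{l(z)} F(a(z), b(z); c₀; tanh² t)`. -/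
noncomputable def sphFun (mα m2α : ℕ) (s r : ℤ) (z : ℂ) (t : ℝ) : ℂ :=
  cCoef mα m2α s r z * (Real.tanh t : ℂ) ^ s *
    (Real.cosh t : ℂ) ^ (lFun mα m2α z) *
    hypF (aFun mα m2α s r z) (bFun mα m2α s r z) (cZero mα m2α s)
      ((Real.tanh t ^ 2 : ℝ) : ℂ)

/-- The rank-one Harish-Chandra `c`-function
`c(z) = 2^{-l(z)} Γ(n/2) Γ(z) / (Γ(½(m_α/2 + 1 + z)) Γ(½(m_α/2 + m_{2α} + z)))`
with `n = m_α + m_{2α} + 1`. -/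
noncomputable def cHC (mα m2α : ℕ) (z : ℂ) : ℂ :=
  (2 : ℂ) ^ (-(lFun mα m2α z)) *
    Complex.Gamma (((mα : ℂ) + (m2α : ℂ) + 1) / 2) * Complex.Gamma z /
    (Complex.Gamma (((mα : ℂ) / 2 + 1 + z) / 2) *
      Complex.Gamma (((mα : ℂ) / 2 + (m2α : ℂ) + z) / 2))

/-!
After cancelling the powers of `cosh t`, the function is
`2^{-l} c_z (tanh t)^s F(a, b; c₀; tanh² t)`, and `tanh t → 1`. Since
`Re (c₀ - a - b) = Re z > 0`, Raabe's test shows that the coefficients of `F` are absolutely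
summable, so by dominated convergence `F(a, b; c₀; tanh² t) → F(a, b; c₀; 1)`, which Gauss's
theorem evaluates as `Γ(c₀) Γ(z) / (Γ(c₀ - a) Γ(c₀ - b))`; the rest is bookkeeping of Gamma
factors.

For Gauss's theorem, the contiguous relation `c (c-a-b) F(c) = (c-a) (c-b) F(c+1)` (at `x = 1`;
the difference of the two series telescopes) makes `Γ(c-a) Γ(c-b) / (Γ(c) Γ(c-a-b)) · F(c)`
invariant under `c ↦ c + 1`. Along `c + N`, both `F(c + N) → 1` (dominated convergence again)
and the Gamma quotient tends to `1` by Euler's limit formula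
`Γ(s) = lim N^s N! / (s (s+1) ⋯ (s+N))`.
-/

open scoped Nat

theorem Real.tendsto_tanh_atTop : Tendsto Real.tanh atTop (𝓝 1) := by
  have htanh : ∀ t, Real.tanh t = 1 - 2 / (Real.exp (2 * t) + 1) := fun t => by
    rw [Real.tanh_eq, Real.exp_neg, show 2 * t = t + t by ring, Real.exp_add]
    field_simp
    ring
  have hden : Tendsto (fun t : ℝ => Real.exp (2 * t) + 1) atTop atTop :=
    tendsto_atTop_add_const_right _ 1 <|
      Real.tendsto_exp_atTop.comp (tendsto_id.const_mul_atTop two_pos)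
  simpa [← htanh] using (tendsto_const_nhds (x := (2 : ℝ)).div_atTop hden).const_sub 1

theorem tendsto_tsum_mul_pow_of_summable_norm {α 𝕜 : Type*} [NormedField 𝕜] [CompleteSpace 𝕜]
    {l : Filter α} {f : ℕ → 𝕜} {x : α → 𝕜} (hf : Summable fun n => ‖f n‖)
    (hx : Tendsto x l (𝓝 1)) (hx₁ : ∀ᶠ i in l, ‖x i‖ ≤ 1) :
    Tendsto (fun i => ∑' n, f n * x i ^ n) l (𝓝 (∑' n, f n)) := by
  refine tendsto_tsum_of_dominated_convergence hf (fun n => ?_) ?_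
  · simpa using (hx.pow n).const_mul (f n)
  · filter_upwards [hx₁] with i hi n
    rw [norm_mul, norm_pow]
    exact mul_le_of_le_one_right (norm_nonneg _) (pow_le_one₀ (norm_nonneg _) hi)

theorem ascPochhammer_eval_eq_prod_range {S : Type*} [CommSemiring S] (x : S) (n : ℕ) :
    (ascPochhammer S n).eval x = ∏ j ∈ Finset.range n, (x + j) := by
  induction n with
  | zero => simp
  | succ n ih => rw [ascPochhammer_succ_eval, ih, Finset.prod_range_succ]

theorem norm_ascPochhammer_eval_le {𝕜 : Type*} [NormedField 𝕜] {x y : 𝕜}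
    (h : ∀ k : ℕ, ‖x + k‖ ≤ ‖y + k‖) (n : ℕ) :
    ‖(ascPochhammer 𝕜 n).eval x‖ ≤ ‖(ascPochhammer 𝕜 n).eval y‖ := by
  induction n with
  | zero => simp
  | succ n ih =>
    simp only [ascPochhammer_succ_eval, norm_mul]
    exact mul_le_mul ih (h n) (norm_nonneg _) (norm_nonneg _)

theorem tsum_sub_succ_of_tendsto_zero {G : Type*} [AddCommGroup G] [TopologicalSpace G]
    [IsTopologicalAddGroup G] [T2Space G] {f : ℕ → G}
    (hs : Summable fun n => f n - f (n + 1)) (hf : Tendsto f atTop (𝓝 0)) :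
    ∑' n, (f n - f (n + 1)) = f 0 := by
  refine tendsto_nhds_unique hs.hasSum.tendsto_sum_nat ?_
  simp only [Finset.sum_range_sub']
  simpa using hf.const_sub (f 0)

theorem isBigO_rpow_neg_of_le_one_sub_div_mul {f : ℕ → ℝ} {q : ℝ} (hq : 1 ≤ q)
    (hf0 : ∀ n, 0 ≤ f n) (hf : ∀ᶠ n : ℕ in atTop, f (n + 1) ≤ (1 - q / n) * f n) :
    f =O[atTop] fun n => (n : ℝ) ^ (-q) := by
  have hanti : ∀ᶠ n : ℕ in atTop, f (n + 1) * ((n + 1 : ℕ) : ℝ) ^ q ≤ f n * (n : ℝ) ^ q := by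
    filter_upwards [hf, eventually_ge_atTop 1] with n hn hn1
    have hn0 : (0 : ℝ) < n := by exact_mod_cast hn1
    -- Bernoulli's inequality at `s = -1 / (n + 1)`
    have hbern : 1 - q / n ≤ ((n : ℝ) / (n + 1)) ^ q := by
      have := one_add_mul_self_le_rpow_one_add (s := -1 / (n + 1)) (by
        rw [le_div_iff₀ (by positivity)]; linarith) hq
      calc 1 - q / n ≤ 1 + q * (-1 / (n + 1)) := by
            rw [mul_div_assoc', mul_neg_one, neg_div, ← sub_eq_add_neg]
            gcongr; linarith
        _ ≤ _ := by convert this using 2; field_simp; ring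
    calc f (n + 1) * ((n + 1 : ℕ) : ℝ) ^ q
        ≤ ((n : ℝ) / (n + 1)) ^ q * f n * ((n : ℝ) + 1) ^ q := by
          push_cast
          gcongr
          exact hn.trans (mul_le_mul_of_nonneg_right hbern (hf0 n))
      _ = f n * (n : ℝ) ^ q := by
          rw [Real.div_rpow hn0.le (by positivity)]
          field_simp
  obtain ⟨J, hJ⟩ := eventually_atTop.1 hanti
  have hle : ∀ n ≥ J, f n * (n : ℝ) ^ q ≤ f J * (J : ℝ) ^ q := by
    intro n hn
    induction n, hn using Nat.le_induction with
    | base => rfl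
    | succ n hn ih => exact (hJ n hn).trans ih
  refine Asymptotics.IsBigO.of_bound (f J * (J : ℝ) ^ q) ?_
  filter_upwards [eventually_ge_atTop J, eventually_ge_atTop 1] with n hn hn1
  have hn0 : (0 : ℝ) < n := by exact_mod_cast hn1
  rw [Real.norm_of_nonneg (hf0 n), Real.norm_of_nonneg (by positivity)]
  calc f n = f n * (n : ℝ) ^ q * (n : ℝ) ^ (-q) := by
        rw [mul_assoc, ← Real.rpow_add hn0, add_neg_cancel, Real.rpow_zero, mul_one]
    _ ≤ f J * (J : ℝ) ^ q * (n : ℝ) ^ (-q) := by gcongr ?_ * _; exact hle n hn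

section Coefficient

variable {𝕂 : Type*} [Field 𝕂]

theorem ordinaryHypergeometricCoefficient_succ_mul [CharZero 𝕂] (a b c : 𝕂) {n : ℕ}
    (hc : c + n ≠ 0) :
    ordinaryHypergeometricCoefficient a b c (n + 1) * ((c + n) * (n + 1)) =
      ordinaryHypergeometricCoefficient a b c n * ((a + n) * (b + n)) := by
  have hn : (n : 𝕂) + 1 ≠ 0 := by exact_mod_cast n.succ_ne_zero
  simp only [ordinaryHypergeometricCoefficient, ascPochhammer_succ_eval, Nat.factorial_succ,
    Nat.cast_mul, Nat.cast_succ, mul_inv]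
  field_simp

theorem ordinaryHypergeometricCoefficient_add_one_mul (a b c : 𝕂) {n : ℕ} (hc : c ≠ 0)
    (hcn : c + n ≠ 0) :
    ordinaryHypergeometricCoefficient a b (c + 1) n * (c + n) =
      ordinaryHypergeometricCoefficient a b c n * c := by
  have hshift : (ascPochhammer 𝕂 n).eval (c + 1) = (ascPochhammer 𝕂 n).eval c * (c + n) / c := by
    rw [eq_div_iff hc, ← ascPochhammer_succ_eval, ascPochhammer_succ_left]
    simp [mul_comm]
  simp only [ordinaryHypergeometricCoefficient, hshift, mul_inv, div_eq_mul_inv, inv_inv]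
  field_simp

end Coefficient

theorem norm_ordinaryHypergeometricCoefficient_le {a b c a' b' c' : ℂ}
    (ha : ∀ k : ℕ, ‖a + k‖ ≤ ‖a' + k‖) (hb : ∀ k : ℕ, ‖b + k‖ ≤ ‖b' + k‖)
    (hc : ∀ k : ℕ, ‖c' + k‖ ≤ ‖c + k‖) (hc' : ∀ k : ℕ, c' + k ≠ 0) (n : ℕ) :
    ‖ordinaryHypergeometricCoefficient a b c n‖ ≤
      ‖ordinaryHypergeometricCoefficient a' b' c' n‖ := by
  have hpos : 0 < ‖(ascPochhammer ℂ n).eval c'‖ := by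
    rw [norm_pos_iff, ascPochhammer_eval_eq_prod_range]
    exact Finset.prod_ne_zero_iff.2 fun k _ => hc' k
  simp only [ordinaryHypergeometricCoefficient, norm_mul, norm_inv]
  gcongr
  · exact norm_ascPochhammer_eval_le ha n
  · exact norm_ascPochhammer_eval_le hb n
  · exact norm_ascPochhammer_eval_le hc n

theorem mul_norm_add_ofReal_le (a : ℂ) {x : ℝ} (hx : 0 ≤ x) (hxa : 0 ≤ x + 2 * a.re) :
    x * ‖a + x‖ ≤ x ^ 2 + a.re * x + a.im ^ 2 := by
  have hnorm : ‖a + x‖ = Real.sqrt ((a.re + x) ^ 2 + a.im ^ 2) := by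
    rw [Complex.norm_def, Complex.normSq_apply]
    simp only [Complex.add_re, Complex.add_im, Complex.ofReal_re, Complex.ofReal_im, add_zero]
    ring_nf
  rw [hnorm, show x * Real.sqrt ((a.re + x) ^ 2 + a.im ^ 2) =
      Real.sqrt (x ^ 2 * ((a.re + x) ^ 2 + a.im ^ 2)) by
    rw [Real.sqrt_mul (sq_nonneg x), Real.sqrt_sq hx], Real.sqrt_le_iff]
  constructor
  · nlinarith [sq_nonneg a.im, mul_nonneg hx hxa]
  · nlinarith [sq_nonneg (a.im ^ 2), mul_nonneg (mul_nonneg hx hxa) (sq_nonneg a.im)]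

theorem eventually_nonneg_cubic {d : ℝ} (hd : 0 < d) (p₂ p₁ p₀ : ℝ) :
    ∀ᶠ x : ℝ in atTop, 0 ≤ d * x ^ 3 + p₂ * x ^ 2 + p₁ * x + p₀ := by
  have hlim : Tendsto (fun x : ℝ => d + p₂ * x⁻¹ + p₁ * x⁻¹ ^ 2 + p₀ * x⁻¹ ^ 3) atTop (𝓝 d) := by
    have hinv := tendsto_inv_atTop_zero (𝕜 := ℝ)
    simpa using ((tendsto_const_nhds.add (hinv.const_mul p₂)).add
      ((hinv.pow 2).const_mul p₁)).add ((hinv.pow 3).const_mul p₀)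
  filter_upwards [hlim.eventually_const_lt hd, eventually_gt_atTop 0] with x hx hx0
  have hcubic : d * x ^ 3 + p₂ * x ^ 2 + p₁ * x + p₀ =
      (d + p₂ * x⁻¹ + p₁ * x⁻¹ ^ 2 + p₀ * x⁻¹ ^ 3) * x ^ 3 := by
    field_simp
  rw [hcubic]
  positivity

theorem eventually_norm_add_mul_norm_add_le (a b c : ℂ) {q : ℝ} (hq : q < 1 + (c - a - b).re) :
    ∀ᶠ x : ℝ in atTop, ‖a + x‖ * ‖b + x‖ ≤ (1 - q / x) * (‖c + x‖ * (x + 1)) := by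
  have hre : c.re = a.re + b.re + (c - a - b).re := by simp
  filter_upwards [eventually_nonneg_cubic (sub_pos.2 hq)
      (c.re - q * (c.re + 1) - a.im ^ 2 - b.im ^ 2 - a.re * b.re)
      (-(q * c.re) - a.re * b.im ^ 2 - b.re * a.im ^ 2) (-(a.im ^ 2 * b.im ^ 2)),
    eventually_ge_atTop (2 * |a.re|), eventually_ge_atTop (2 * |b.re|),
    eventually_ge_atTop (-c.re), eventually_ge_atTop q, eventually_gt_atTop 0]
    with x hcubic ha hb hc hxq hx
  have hA := mul_norm_add_ofReal_le a hx.le (by linarith [neg_abs_le a.re])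
  have hB := mul_norm_add_ofReal_le b hx.le (by linarith [neg_abs_le b.re])
  have hC : x + c.re ≤ ‖c + x‖ := by simpa [add_comm] using Complex.re_le_norm (c + x)
  -- multiplied by `x ^ 2`, the claim compares two quartics whose difference is a cubic with
  -- positive leading coefficient `1 + Re (c - a - b) - q`
  have hdiff : x * (x - q) * (x + c.re) * (x + 1) -
      (x ^ 2 + a.re * x + a.im ^ 2) * (x ^ 2 + b.re * x + b.im ^ 2) =
      (1 + (c - a - b).re - q) * x ^ 3 + (c.re - q * (c.re + 1) - a.im ^ 2 - b.im ^ 2 -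
        a.re * b.re) * x ^ 2 + (-(q * c.re) - a.re * b.im ^ 2 - b.re * a.im ^ 2) * x +
        -(a.im ^ 2 * b.im ^ 2) := by
    rw [hre]; ring
  refine le_of_mul_le_mul_left ?_ (pow_pos hx 2)
  calc x ^ 2 * (‖a + x‖ * ‖b + x‖) = (x * ‖a + x‖) * (x * ‖b + x‖) := by ring
    _ ≤ (x ^ 2 + a.re * x + a.im ^ 2) * (x ^ 2 + b.re * x + b.im ^ 2) :=
        mul_le_mul hA hB (by positivity) ((mul_nonneg hx.le (norm_nonneg _)).trans hA)
    _ ≤ x * (x - q) * (x + c.re) * (x + 1) := by linarith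
    _ ≤ x * (x - q) * ‖c + x‖ * (x + 1) := by gcongr
    _ = x ^ 2 * ((1 - q / x) * (‖c + x‖ * (x + 1))) := by field_simp

theorem Complex.re_add_natCast_pos {c : ℂ} (hc : 0 < c.re) (n : ℕ) : 0 < (c + n).re := by
  simpa using add_pos_of_pos_of_nonneg hc n.cast_nonneg

theorem isBigO_norm_ordinaryHypergeometricCoefficient (a b c : ℂ) {q : ℝ} (hq₁ : 1 ≤ q)
    (hq : q < 1 + (c - a - b).re) :
    (fun n => ‖ordinaryHypergeometricCoefficient a b c n‖) =O[atTop]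
      fun n => (n : ℝ) ^ (-q) := by
  refine isBigO_rpow_neg_of_le_one_sub_div_mul hq₁ (fun n => norm_nonneg _) ?_
  have hratio :=
    tendsto_natCast_atTop_atTop.eventually (eventually_norm_add_mul_norm_add_le a b c hq)
  filter_upwards [hratio, eventually_gt_atTop ⌈-c.re⌉₊] with n hn hn'
  have hcn : c + n ≠ 0 := Complex.ne_zero_of_re_pos <| by
    simpa [neg_lt_iff_pos_add'] using Nat.lt_of_ceil_lt hn'
  have hn1 : ‖(n : ℂ) + 1‖ = n + 1 := by exact_mod_cast Complex.norm_natCast (n + 1)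
  have hrec : ‖ordinaryHypergeometricCoefficient a b c (n + 1)‖ * (‖c + n‖ * (n + 1)) =
      ‖ordinaryHypergeometricCoefficient a b c n‖ * (‖a + n‖ * ‖b + n‖) := by
    simpa only [norm_mul, hn1] using
      congrArg norm (ordinaryHypergeometricCoefficient_succ_mul a b c hcn)
  simp only [Complex.ofReal_natCast] at hn
  have hden : 0 < ‖c + n‖ * (n + 1) := mul_pos (norm_pos_iff.2 hcn) (by positivity)
  refine le_of_mul_le_mul_right ?_ hden
  calc _ = ‖ordinaryHypergeometricCoefficient a b c n‖ * (‖a + n‖ * ‖b + n‖) := hrec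
    _ ≤ ‖ordinaryHypergeometricCoefficient a b c n‖ * ((1 - q / n) * (‖c + n‖ * (n + 1))) := by
        gcongr
    _ = _ := by ring

theorem summable_norm_ordinaryHypergeometricCoefficient {a b c : ℂ} (h : 0 < (c - a - b).re) :
    Summable fun n => ‖ordinaryHypergeometricCoefficient a b c n‖ :=
  summable_of_isBigO_nat (Real.summable_nat_rpow.2 (by linarith))
    (isBigO_norm_ordinaryHypergeometricCoefficient a b c (q := 1 + (c - a - b).re / 2)
      (by linarith) (by linarith))

theorem tendsto_natCast_mul_ordinaryHypergeometricCoefficient {a b c : ℂ}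
    (h : 0 < (c - a - b).re) :
    Tendsto (fun n : ℕ => (n : ℂ) * ordinaryHypergeometricCoefficient a b c n) atTop (𝓝 0) := by
  obtain ⟨q, hq₁, hq⟩ := exists_between (lt_add_of_pos_right 1 h)
  have hO := (Asymptotics.isBigO_refl (fun n : ℕ => (n : ℝ)) atTop).mul
    (isBigO_norm_ordinaryHypergeometricCoefficient a b c hq₁.le hq)
  have hpow : Tendsto (fun n : ℕ => (n : ℝ) * (n : ℝ) ^ (-q)) atTop (𝓝 0) := by
    refine ((tendsto_rpow_neg_atTop (y := q - 1) (sub_pos.2 hq₁)).comp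
      tendsto_natCast_atTop_atTop).congr' ?_
    filter_upwards [eventually_ge_atTop 1] with n hn
    have hn0 : (0 : ℝ) < n := by exact_mod_cast hn
    rw [Function.comp_apply, Real.rpow_neg hn0.le, Real.rpow_neg hn0.le, Real.rpow_sub hn0,
      Real.rpow_one]
    field_simp
  rw [tendsto_zero_iff_norm_tendsto_zero]
  simpa using hO.trans_tendsto hpow

theorem mul_tsum_ordinaryHypergeometricCoefficient_eq {a b c : ℂ} (hc : 0 < c.re)
    (h : 0 < (c - a - b).re) :
    c * (c - a - b) * ∑' n, ordinaryHypergeometricCoefficient a b c n =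
      (c - a) * (c - b) * ∑' n, ordinaryHypergeometricCoefficient a b (c + 1) n := by
  set g := ordinaryHypergeometricCoefficient a b c
  set g₁ := ordinaryHypergeometricCoefficient a b (c + 1)
  set u : ℕ → ℂ := fun n => c * (n * g n)
  have hc0 : c ≠ 0 := Complex.ne_zero_of_re_pos hc
  have hterm : ∀ n, c * (c - a - b) * g n - (c - a) * (c - b) * g₁ n = u n - u (n + 1) := by
    intro n
    have hcn := Complex.ne_zero_of_re_pos (Complex.re_add_natCast_pos hc n)
    have hrec := ordinaryHypergeometricCoefficient_succ_mul a b c hcn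
    have hshift := ordinaryHypergeometricCoefficient_add_one_mul a b c hc0 hcn
    refine mul_left_cancel₀ hcn ?_
    simp only [u]
    push_cast
    linear_combination (-(c - a) * (c - b)) * hshift + c * hrec
  have hsum₁ : Summable g := (summable_norm_ordinaryHypergeometricCoefficient h).of_norm
  have hsum₂ : Summable g₁ := (summable_norm_ordinaryHypergeometricCoefficient
    (by simpa [add_sub_right_comm] using add_pos_of_pos_of_nonneg h zero_le_one)).of_norm
  have hsum : Summable fun n => c * (c - a - b) * g n - (c - a) * (c - b) * g₁ n :=
    (hsum₁.mul_left _).sub (hsum₂.mul_left _)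
  have htel := tsum_sub_succ_of_tendsto_zero ((summable_congr hterm).1 hsum)
    (by simpa using (tendsto_natCast_mul_ordinaryHypergeometricCoefficient h).const_mul c)
  rw [← tsum_congr hterm, (hsum₁.mul_left _).tsum_sub (hsum₂.mul_left _), tsum_mul_left,
    tsum_mul_left] at htel
  simpa [u, sub_eq_zero] using htel

theorem Complex.Gamma_add_natCast_add_one_div {s : ℂ} (hs : Gamma s ≠ 0) (N : ℕ) :
    Gamma (s + (N + 1)) / ((N : ℂ) ^ s * N !) = Gamma s / GammaSeq s N := by
  have hpoles : ∀ k : ℕ, s ≠ -k := fun k h => hs ((Gamma_eq_zero_iff s).2 ⟨k, h⟩)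
  have hprod : Gamma (s + (N + 1)) = Gamma s * ∏ j ∈ Finset.range (N + 1), (s + j) := by
    rw [← ascPochhammer_eval_eq_prod_range, ← Gamma_add_nat_div_Gamma_eq s hpoles,
      mul_div_cancel₀ _ hs]
    push_cast; rfl
  rw [hprod, GammaSeq, div_div_eq_mul_div]

theorem Complex.tendsto_Gamma_add_natCast_add_one_div {s : ℂ} (hs : Gamma s ≠ 0) :
    Tendsto (fun N : ℕ => Gamma (s + (N + 1)) / ((N : ℂ) ^ s * N !)) atTop (𝓝 1) := by
  have hlim := (tendsto_const_nhds (x := Gamma s)).div (GammaSeq_tendsto_Gamma s) hs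
  rw [div_self hs] at hlim
  exact hlim.congr fun N => (Gamma_add_natCast_add_one_div hs N).symm

theorem Complex.tendsto_Gamma_mul_Gamma_div_Gamma_mul_Gamma {s t u v : ℂ} (h : s + t = u + v)
    (hs : Gamma s ≠ 0) (ht : Gamma t ≠ 0) (hu : Gamma u ≠ 0) (hv : Gamma v ≠ 0) :
    Tendsto (fun N : ℕ => Gamma (s + N) * Gamma (t + N) / (Gamma (u + N) * Gamma (v + N)))
      atTop (𝓝 1) := by
  rw [← tendsto_add_atTop_iff_nat 1]
  have hlim := ((tendsto_Gamma_add_natCast_add_one_div hs).mul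
    (tendsto_Gamma_add_natCast_add_one_div ht)).div ((tendsto_Gamma_add_natCast_add_one_div hu).mul
    (tendsto_Gamma_add_natCast_add_one_div hv)) (by norm_num)
  rw [mul_one, div_one] at hlim
  refine hlim.congr' ?_
  filter_upwards [eventually_ne_atTop 0] with N hN0
  simp only [Pi.div_apply, Nat.cast_add, Nat.cast_one]
  have hN : (N : ℂ) ≠ 0 := Nat.cast_ne_zero.2 hN0
  have hX : (N : ℂ) ^ u * N ! * ((N : ℂ) ^ v * N !) = (N : ℂ) ^ s * N ! * ((N : ℂ) ^ t * N !) := by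
    rw [mul_mul_mul_comm, ← Complex.cpow_add _ _ hN, ← h, Complex.cpow_add _ _ hN,
      mul_mul_mul_comm]
  have hX0 : (N : ℂ) ^ s * N ! * ((N : ℂ) ^ t * N !) ≠ 0 := by
    simp [Complex.cpow_eq_zero_iff, hN, N.factorial_ne_zero]
  rw [div_mul_div_comm, div_mul_div_comm, div_div_div_eq, hX, mul_comm _ (_ * _ : ℂ),
    mul_div_mul_left _ _ hX0]

theorem tendsto_ordinaryHypergeometricCoefficient_add_natCast (a b c : ℂ) (n : ℕ) :
    Tendsto (fun N : ℕ => ordinaryHypergeometricCoefficient a b (c + N) n) atTop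
      (𝓝 (if n = 0 then 1 else 0)) := by
  rcases Nat.eq_zero_or_pos n with rfl | hn
  · simp [ordinaryHypergeometricCoefficient]
  have hdeg : 0 < (ascPochhammer ℂ n).degree := by
    rw [Polynomial.degree_eq_natDegree (monic_ascPochhammer ℂ n).ne_zero,
      ascPochhammer_natDegree]
    exact_mod_cast hn
  have hnorm : Tendsto (fun N : ℕ => ‖c + N‖) atTop atTop :=
    tendsto_norm_atTop_iff_cobounded.2
      ((tendsto_const_add_cobounded c).comp tendsto_natCast_atTop_cobounded)
  have hinv : Tendsto (fun N : ℕ => ((ascPochhammer ℂ n).eval (c + N))⁻¹) atTop (𝓝 0) :=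
    tendsto_inv₀_cobounded.comp
      (tendsto_norm_atTop_iff_cobounded.1 ((ascPochhammer ℂ n).tendsto_norm_atTop hdeg hnorm))
  simpa [hn.ne'] using hinv.const_mul ((n ! : ℂ)⁻¹ * (ascPochhammer ℂ n).eval a *
    (ascPochhammer ℂ n).eval b)

theorem tendsto_tsum_ordinaryHypergeometricCoefficient_add_natCast (a b c : ℂ) :
    Tendsto (fun N : ℕ => ∑' n, ordinaryHypergeometricCoefficient a b (c + N) n) atTop (𝓝 1) := by
  set x : ℝ := ‖a‖ + ‖b‖ + 1
  have hnorm : ∀ (y : ℝ) (k : ℕ), 0 ≤ y → ‖(y : ℂ) + k‖ = y + k := fun y k hy => by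
    rw [← Complex.ofReal_natCast, ← Complex.ofReal_add, Complex.norm_real,
      Real.norm_of_nonneg (by positivity)]
  have hbound : ∀ᶠ N : ℕ in atTop, ∀ n, ‖ordinaryHypergeometricCoefficient a b (c + N) n‖ ≤
      ‖ordinaryHypergeometricCoefficient (‖a‖ : ℂ) (‖b‖ : ℂ) (x : ℂ) n‖ := by
    filter_upwards [eventually_ge_atTop ⌈x - c.re⌉₊] with N hN n
    have hxN : x ≤ c.re + N := by linarith [Nat.le_of_ceil_le hN]
    refine norm_ordinaryHypergeometricCoefficient_le (fun k => ?_) (fun k => ?_) (fun k => ?_)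
      (fun k => Complex.ne_zero_of_re_pos (by
        simp only [add_re, ofReal_re, natCast_re]; positivity)) n
    · rw [hnorm _ _ (norm_nonneg a)]
      exact (norm_add_le _ _).trans (by simp)
    · rw [hnorm _ _ (norm_nonneg b)]
      exact (norm_add_le _ _).trans (by simp)
    · rw [hnorm _ _ (by positivity)]
      refine le_trans ?_ (Complex.re_le_norm _)
      simp only [add_re, natCast_re, add_le_add_iff_right]
      linarith
  have hsum := summable_norm_ordinaryHypergeometricCoefficient (a := (‖a‖ : ℂ)) (b := (‖b‖ : ℂ))
    (c := (x : ℂ)) (by simp only [x, sub_re, ofReal_re, sub_pos]; linarith)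
  simpa using tendsto_tsum_of_dominated_convergence hsum
    (tendsto_ordinaryHypergeometricCoefficient_add_natCast a b c) hbound

/-- Gauss's summation theorem says that this is `1`. -/
noncomputable def gaussNormalizedSum (a b c : ℂ) : ℂ :=
  Gamma (c - a) * Gamma (c - b) / (Gamma c * Gamma (c - a - b)) *
    ∑' n, ordinaryHypergeometricCoefficient a b c n

section Gauss

variable {a b c : ℂ}

theorem gaussNormalizedSum_add_one (hc : 0 < c.re) (hca : 0 < (c - a).re) (hcb : 0 < (c - b).re)
    (habc : 0 < (c - a - b).re) : gaussNormalizedSum a b (c + 1) = gaussNormalizedSum a b c := by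
  have hcontig := mul_tsum_ordinaryHypergeometricCoefficient_eq hc habc
  have hc0 := Complex.ne_zero_of_re_pos hc
  have habc0 := Complex.ne_zero_of_re_pos habc
  have hGc := Complex.Gamma_ne_zero_of_re_pos hc
  have hGabc := Complex.Gamma_ne_zero_of_re_pos habc
  rw [gaussNormalizedSum, gaussNormalizedSum, show c + 1 - a - b = c - a - b + 1 by ring,
    show c + 1 - a = c - a + 1 by ring, show c + 1 - b = c - b + 1 by ring,
    Complex.Gamma_add_one _ hc0, Complex.Gamma_add_one _ habc0,
    Complex.Gamma_add_one _ (Complex.ne_zero_of_re_pos hca),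
    Complex.Gamma_add_one _ (Complex.ne_zero_of_re_pos hcb)]
  field_simp
  linear_combination -Gamma (c - a) * Gamma (c - b) * hcontig

theorem gaussNormalizedSum_add_natCast (hc : 0 < c.re) (hca : 0 < (c - a).re)
    (hcb : 0 < (c - b).re) (habc : 0 < (c - a - b).re) (N : ℕ) :
    gaussNormalizedSum a b (c + N) = gaussNormalizedSum a b c := by
  induction N with
  | zero => simp
  | succ N ih =>
    have hre {w : ℂ} (hw : 0 < w.re) : 0 < (w + N).re := Complex.re_add_natCast_pos hw N
    rw [Nat.cast_succ, ← add_assoc, gaussNormalizedSum_add_one (hre hc)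
      (by simpa [add_sub_right_comm] using hre hca) (by simpa [add_sub_right_comm] using hre hcb)
      (by simpa [add_sub_right_comm] using hre habc), ih]

theorem tendsto_gaussNormalizedSum_add_natCast (hc : 0 < c.re) (hca : 0 < (c - a).re)
    (hcb : 0 < (c - b).re) (habc : 0 < (c - a - b).re) :
    Tendsto (fun N : ℕ => gaussNormalizedSum a b (c + N)) atTop (𝓝 1) := by
  have hGamma := Complex.tendsto_Gamma_mul_Gamma_div_Gamma_mul_Gamma (by ring)
    (Complex.Gamma_ne_zero_of_re_pos hca) (Complex.Gamma_ne_zero_of_re_pos hcb)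
    (Complex.Gamma_ne_zero_of_re_pos hc) (Complex.Gamma_ne_zero_of_re_pos habc)
  simpa [gaussNormalizedSum, add_sub_right_comm] using
    hGamma.mul (tendsto_tsum_ordinaryHypergeometricCoefficient_add_natCast a b c)

theorem tsum_ordinaryHypergeometricCoefficient_eq_Gamma (hc : 0 < c.re) (hca : 0 < (c - a).re)
    (hcb : 0 < (c - b).re) (habc : 0 < (c - a - b).re) :
    ∑' n, ordinaryHypergeometricCoefficient a b c n =
      Gamma c * Gamma (c - a - b) / (Gamma (c - a) * Gamma (c - b)) := by
  have hone : gaussNormalizedSum a b c = 1 := by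
    simpa [gaussNormalizedSum_add_natCast hc hca hcb habc] using
      tendsto_gaussNormalizedSum_add_natCast hc hca hcb habc
  have hGc := Complex.Gamma_ne_zero_of_re_pos hc
  have hGca := Complex.Gamma_ne_zero_of_re_pos hca
  have hGcb := Complex.Gamma_ne_zero_of_re_pos hcb
  have hGabc := Complex.Gamma_ne_zero_of_re_pos habc
  rw [gaussNormalizedSum] at hone
  field_simp at hone ⊢
  linear_combination hone

end Gauss

theorem hypF_eq_tsum (a b c x : ℂ) :
    hypF a b c x = ∑' n, ordinaryHypergeometricCoefficient a b c n * x ^ n := by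
  simp only [hypF, poch, ordinaryHypergeometricCoefficient, div_eq_mul_inv, mul_inv]
  congr 1 with n
  ring

theorem tendsto_hypF_tanh_sq {a b c : ℂ} (h : 0 < (c - a - b).re) :
    Tendsto (fun t : ℝ => hypF a b c ((Real.tanh t ^ 2 : ℝ) : ℂ)) atTop
      (𝓝 (∑' n, ordinaryHypergeometricCoefficient a b c n)) := by
  simp only [hypF_eq_tsum]
  refine tendsto_tsum_mul_pow_of_summable_norm (summable_norm_ordinaryHypergeometricCoefficient h)
    ?_ (.of_forall fun t => ?_)
  · have hsq := Real.tendsto_tanh_atTop.pow 2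
    rw [one_pow] at hsq
    rw [← Complex.ofReal_one]
    exact (Complex.continuous_ofReal.tendsto 1).comp hsq
  · rw [Complex.norm_real, Real.norm_of_nonneg (sq_nonneg _)]
    exact (Real.tanh_sq_lt_one t).le

theorem two_mul_cosh_cpow_mul_sphFun (mα m2α : ℕ) (s r : ℤ) (z : ℂ) (t : ℝ) :
    ((2 * Real.cosh t : ℝ) : ℂ) ^ (-(lFun mα m2α z)) * sphFun mα m2α s r z t =
      2 ^ (-(lFun mα m2α z)) * cCoef mα m2α s r z * (Real.tanh t : ℂ) ^ s *
        hypF (aFun mα m2α s r z) (bFun mα m2α s r z) (cZero mα m2α s)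
          ((Real.tanh t ^ 2 : ℝ) : ℂ) := by
  have hcosh : (0 : ℝ) < Real.cosh t := Real.cosh_pos t
  have hcancel : ((Real.cosh t : ℝ) : ℂ) ^ (-(lFun mα m2α z)) *
      ((Real.cosh t : ℝ) : ℂ) ^ (lFun mα m2α z) = 1 := by
    rw [← Complex.cpow_add _ _ (Complex.ofReal_ne_zero.2 hcosh.ne'), neg_add_cancel,
      Complex.cpow_zero]
  rw [Complex.ofReal_mul, Complex.mul_cpow_ofReal_nonneg zero_le_two hcosh.le, sphFun,
    Complex.ofReal_ofNat]
  linear_combination (2 ^ (-(lFun mα m2α z)) * cCoef mα m2α s r z * (Real.tanh t : ℂ) ^ s *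
    hypF (aFun mα m2α s r z) (bFun mα m2α s r z) (cZero mα m2α s)
    ((Real.tanh t ^ 2 : ℝ) : ℂ)) * hcancel

section Parameters

variable (mα m2α : ℕ) (s r : ℤ) (z : ℂ)

theorem cZero_sub_aFun_sub_bFun : cZero mα m2α s - aFun mα m2α s r z - bFun mα m2α s r z = z := by
  simp only [cZero, aFun, bFun, lFun, rhoH]; ring

theorem cZero_sub_aFun :
    cZero mα m2α s - aFun mα m2α s r z = (z + (mα : ℂ) / 2 + 1 + (s : ℂ) - (r : ℂ)) / 2 := by
  simp only [cZero, aFun, lFun, rhoH]; ring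

theorem cZero_sub_bFun :
    cZero mα m2α s - bFun mα m2α s r z =
      (z + (mα : ℂ) / 2 + (m2α : ℂ) + (s : ℂ) + (r : ℂ)) / 2 := by
  simp only [cZero, bFun, lFun, rhoH]; ring

variable {s r z}

theorem re_cZero_pos (hs : 0 ≤ s) : 0 < (cZero mα m2α s).re := by
  simp only [cZero, add_re, intCast_re, div_ofNat_re, natCast_re, one_re]
  positivity

theorem re_cZero_sub_aFun_pos (hrs : r ≤ s) (hz : 0 < z.re) :
    0 < (cZero mα m2α s - aFun mα m2α s r z).re := by
  rw [cZero_sub_aFun]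
  have : (r : ℝ) ≤ s := by exact_mod_cast hrs
  simp only [div_ofNat_re, sub_re, add_re, natCast_re, one_re, intCast_re]
  linarith [Nat.cast_nonneg (α := ℝ) mα]

theorem re_cZero_sub_bFun_pos (hr : 0 ≤ r) (hrs : r ≤ s) (hz : 0 < z.re) :
    0 < (cZero mα m2α s - bFun mα m2α s r z).re := by
  rw [cZero_sub_bFun]
  have : (0 : ℝ) ≤ r := by exact_mod_cast hr
  have : (r : ℝ) ≤ s := by exact_mod_cast hrs
  simp only [div_ofNat_re, add_re, natCast_re, intCast_re]
  linarith [Nat.cast_nonneg (α := ℝ) mα, Nat.cast_nonneg (α := ℝ) m2α]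

theorem two_cpow_mul_cCoef_mul_gaussSum_eq (hr : 0 ≤ r) (hrs : r ≤ s) (hz : 0 < z.re) :
    2 ^ (-(lFun mα m2α z)) * cCoef mα m2α s r z *
      (Gamma (cZero mα m2α s) * Gamma (cZero mα m2α s - aFun mα m2α s r z - bFun mα m2α s r z) /
        (Gamma (cZero mα m2α s - aFun mα m2α s r z) * Gamma (cZero mα m2α s - bFun mα m2α s r z))) =
      Gamma ((s : ℂ) + ((mα : ℂ) + (m2α : ℂ) + 1) / 2) /
        Gamma (((mα : ℂ) + (m2α : ℂ) + 1) / 2) * cHC mα m2α z := by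
  have hA := Complex.Gamma_ne_zero_of_re_pos (re_cZero_sub_aFun_pos mα m2α hrs hz)
  have hB := Complex.Gamma_ne_zero_of_re_pos (re_cZero_sub_bFun_pos mα m2α hr hrs hz)
  have hn : Gamma (((mα : ℂ) + (m2α : ℂ) + 1) / 2) ≠ 0 :=
    Complex.Gamma_ne_zero_of_re_pos (by
      simp only [div_ofNat_re, add_re, natCast_re, one_re]; positivity)
  rw [cZero_sub_aFun] at hA
  rw [cZero_sub_bFun] at hB
  rw [cZero_sub_aFun_sub_bFun, cZero_sub_aFun, cZero_sub_bFun, cHC, cCoef, cZero,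
    add_comm ((mα : ℂ) / 2 + 1),
    add_comm ((mα : ℂ) / 2 + (m2α : ℂ)), ← add_assoc, ← add_assoc]
  generalize Gamma ((z + (mα : ℂ) / 2 + 1 + (s : ℂ) - (r : ℂ)) / 2) = GA at hA ⊢
  generalize Gamma ((z + (mα : ℂ) / 2 + (m2α : ℂ) + (s : ℂ) + (r : ℂ)) / 2) = GB at hB ⊢
  generalize Gamma (((mα : ℂ) + (m2α : ℂ) + 1) / 2) = Gn at hn ⊢
  field_simp

end Parameters

/-- Asymptotics at infinity of the rank-one spherical function of `K`-type `δ`: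
for `Re z > 0`, `(2 cosh t)^{-l(z)} φ_z(t) → (Γ(s + n/2)/Γ(n/2)) c(z)` as `t → ∞`. -/
theorem spherical_asymptotics (mα m2α : ℕ) (r s : ℤ) (hr : 0 ≤ r) (hrs : r ≤ s)
    (z : ℂ) (hz : 0 < z.re) :
    Tendsto
      (fun t : ℝ => ((2 * Real.cosh t : ℝ) : ℂ) ^ (-(lFun mα m2α z)) *
        sphFun mα m2α s r z t)
      atTop
      (𝓝 (Complex.Gamma ((s : ℂ) + ((mα : ℂ) + (m2α : ℂ) + 1) / 2) /
        Complex.Gamma (((mα : ℂ) + (m2α : ℂ) + 1) / 2) * cHC mα m2α z)) := by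
  have habc : 0 < (cZero mα m2α s - aFun mα m2α s r z - bFun mα m2α s r z).re := by
    rwa [cZero_sub_aFun_sub_bFun]
  have htanh : Tendsto (fun t : ℝ => (Real.tanh t : ℂ) ^ s) atTop (𝓝 1) := by
    have h := (Complex.continuous_ofReal.tendsto 1).comp Real.tendsto_tanh_atTop
    rw [Complex.ofReal_one] at h
    have h' := (continuousAt_zpow₀ (1 : ℂ) s (.inl one_ne_zero)).tendsto.comp h
    rwa [one_zpow] at h'
  have hlim := ((tendsto_const_nhds (x := 2 ^ (-(lFun mα m2α z)) * cCoef mα m2α s r z)).mul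
    htanh).mul (tendsto_hypF_tanh_sq habc)
  rw [mul_one, tsum_ordinaryHypergeometricCoefficient_eq_Gamma (re_cZero_pos mα m2α (hr.trans hrs))
    (re_cZero_sub_aFun_pos mα m2α hrs hz) (re_cZero_sub_bFun_pos mα m2α hr hrs hz) habc,
    two_cpow_mul_cCoef_mul_gaussSum_eq mα m2α hr hrs hz] at hlim
  simpa only [two_mul_cosh_cpow_mul_sphFun] using hlim
end

section
/- (Gauss summation theorem.) Let a, b, c ∈ ℂ with c not a nonpositive integer and Re(c − a − b) > 0. Then the series ∑_{n≥0} (a)_n (b)_n / ((c)_n · n!) converges absolutely and its sum equals Γ(c)·Γ(c − a − b) / (Γ(c − a)·Γ(c − b)), where Γ is the complex Gamma function. -/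
/-!
Euler's limit `Γ(z) = lim n^z n! / (z)_{n+1}` shows that the `n`-th term is
`O(n^{-1-Re(c-a-b)})`, so the series converges absolutely. Writing `F(c)` for its sum, a termwise
identity telescopes to the contiguous relation `c (c-a-b) F(c) = (c-a)(c-b) F(c+1)`; iterating,
`F(c) = (c-a)_m (c-b)_m / ((c)_m (c-a-b)_m) · F(c+m)` for every `m`. As `m → ∞`, `F(c+m) → 1` by
dominated convergence (Tannery's theorem), and the Pochhammer quotient tends to
`Γ(c) Γ(c-a-b) / (Γ(c-a) Γ(c-b))` by Euler's limit again.
-/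

open Complex

open Filter Finset Topology Asymptotics
open scoped Nat

lemma tsum_eq_of_eq_sub_succ {G : Type*} [AddCommGroup G] [TopologicalSpace G]
    [IsTopologicalAddGroup G] [T2Space G] {f g : ℕ → G} (hg : Summable g)
    (hgf : ∀ n, g n = f n - f (n + 1)) (hf : Tendsto f atTop (𝓝 0)) :
    ∑' n, g n = f 0 := by
  refine tendsto_nhds_unique hg.hasSum.tendsto_sum_nat ?_
  simp_rw [hgf, sum_range_sub']
  simpa using tendsto_const_nhds.sub hf

lemma poch_zero (a : ℂ) : poch a 0 = 1 := by simp [poch]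

lemma poch_succ (a : ℂ) (n : ℕ) : poch a (n + 1) = poch a n * (a + n) := by
  simp [poch, ascPochhammer_succ_right]

lemma poch_succ' (a : ℂ) (n : ℕ) : poch a (n + 1) = a * poch (a + 1) n := by
  simp [poch, ascPochhammer_succ_left, Polynomial.eval_comp]

lemma poch_eq_prod (a : ℂ) (n : ℕ) : poch a n = ∏ j ∈ range n, (a + j) := by
  induction n with
  | zero => simp [poch_zero]
  | succ n ih => rw [poch_succ, ih, prod_range_succ]

lemma factorial_eq_poch_one (n : ℕ) : (n ! : ℂ) = poch 1 n := Nat.cast_factorial ℂ n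

lemma poch_neg_natCast_of_lt {k n : ℕ} (h : k < n) : poch (-k) n = 0 :=
  ascPochhammer_eval_neg_coe_nat_of_lt h

lemma poch_ne_zero {z : ℂ} (hz : ∀ k : ℕ, z ≠ -k) (n : ℕ) : poch z n ≠ 0 := by
  simp only [poch, ne_eq, ascPochhammer_eval_eq_zero_iff, not_exists, not_and]
  exact fun k _ hk => hz k (by rw [hk, neg_neg])

lemma add_natCast_ne_neg_natCast {z : ℂ} (hz : ∀ k : ℕ, z ≠ -k) (m k : ℕ) : z + m ≠ -k :=
  fun h => hz (m + k) (by push_cast; linear_combination h)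

lemma ne_neg_natCast_of_re_pos {z : ℂ} (hz : 0 < z.re) (k : ℕ) : z ≠ -k := fun h => by
  have := congrArg re h
  simp only [neg_re, natCast_re] at this
  linarith [k.cast_nonneg (α := ℝ)]

lemma re_add_natCast_sub_sub (a b c : ℂ) (m : ℕ) : (c + m - a - b).re = (c - a - b).re + m := by
  simp; ring

lemma GammaSeq_eq_div_poch (z : ℂ) (n : ℕ) : GammaSeq z n = (n : ℂ) ^ z * n ! / poch z (n + 1) := by
  rw [GammaSeq, poch_eq_prod]

lemma poch_succ_mul_GammaSeq {z : ℂ} (hz : ∀ k : ℕ, z ≠ -k) (n : ℕ) :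
    poch z (n + 1) * GammaSeq z n = (n : ℂ) ^ z * n ! := by
  rw [GammaSeq_eq_div_poch, mul_div_cancel₀ _ (poch_ne_zero hz _)]

lemma cpow_mul_poch_div_poch_eq {x y z w : ℂ} (hx : ∀ k : ℕ, x ≠ -k) (hy : ∀ k : ℕ, y ≠ -k)
    (hz : ∀ k : ℕ, z ≠ -k) (hw : ∀ k : ℕ, w ≠ -k) {n : ℕ} (hn : n ≠ 0) :
    (n : ℂ) ^ (z + w - x - y) *
        (poch x (n + 1) * poch y (n + 1) / (poch z (n + 1) * poch w (n + 1)))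
      = GammaSeq z n * GammaSeq w n / (GammaSeq x n * GammaSeq y n) := by
  have hn' : (n : ℂ) ≠ 0 := Nat.cast_ne_zero.mpr hn
  have hpow :
      (n : ℂ) ^ (z + w - x - y) * (n : ℂ) ^ x * (n : ℂ) ^ y = (n : ℂ) ^ z * (n : ℂ) ^ w := by
    rw [← cpow_add _ _ hn', ← cpow_add _ _ hn', ← cpow_add _ _ hn']; ring_nf
  have hGamma {u : ℂ} (hu : ∀ k : ℕ, u ≠ -k) : GammaSeq u n ≠ 0 := by
    rw [GammaSeq_eq_div_poch]
    exact div_ne_zero (mul_ne_zero (fun h => hn' ((cpow_eq_zero_iff _ _).mp h).1)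
      (Nat.cast_ne_zero.mpr n.factorial_ne_zero)) (poch_ne_zero hu _)
  have ex := poch_succ_mul_GammaSeq hx n
  have ey := poch_succ_mul_GammaSeq hy n
  have ez := poch_succ_mul_GammaSeq hz n
  have ew := poch_succ_mul_GammaSeq hw n
  have hpz := poch_ne_zero hz (n + 1)
  have hpw := poch_ne_zero hw (n + 1)
  have hGx := hGamma hx
  have hGy := hGamma hy
  field_simp
  linear_combination ((n : ℂ) ^ (z + w - x - y) * poch y (n + 1) * GammaSeq y n) * ex
    + ((n : ℂ) ^ (z + w - x - y) * (n : ℂ) ^ x * n !) * ey + ((n ! : ℂ) ^ 2) * hpow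
    - (poch w (n + 1) * GammaSeq w n) * ez - ((n : ℂ) ^ z * n !) * ew

lemma tendsto_cpow_mul_poch_div_poch {x y z w : ℂ} (hz : ∀ k : ℕ, z ≠ -k)
    (hw : ∀ k : ℕ, w ≠ -k) :
    Tendsto (fun n : ℕ => (n : ℂ) ^ (z + w - x - y) *
        (poch x (n + 1) * poch y (n + 1) / (poch z (n + 1) * poch w (n + 1)))) atTop
      (𝓝 (Gamma z * Gamma w / (Gamma x * Gamma y))) := by
  by_cases hxy : ∃ k : ℕ, x = -k ∨ y = -k
  · obtain ⟨k, hk⟩ := hxy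
    -- `Gamma` vanishes at its poles, so the junk value `_ / 0 = 0` is the true value
    -- `1 / Γ(-k) = 0`.
    have hGamma : Gamma x * Gamma y = 0 := by
      rcases hk with rfl | rfl <;> simp [Gamma_neg_nat_eq_zero]
    rw [hGamma, div_zero]
    refine tendsto_const_nhds.congr' ?_
    filter_upwards [eventually_ge_atTop k] with n hn
    have hpoch : poch x (n + 1) * poch y (n + 1) = 0 := by
      rcases hk with rfl | rfl <;> simp [poch_neg_natCast_of_lt (Nat.lt_succ_of_le hn)]
    rw [hpoch, zero_div, mul_zero]
  · push Not at hxy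
    have hlim := ((GammaSeq_tendsto_Gamma z).mul (GammaSeq_tendsto_Gamma w)).div
      ((GammaSeq_tendsto_Gamma x).mul (GammaSeq_tendsto_Gamma y))
      (mul_ne_zero (Gamma_ne_zero fun k => (hxy k).1) (Gamma_ne_zero fun k => (hxy k).2))
    refine hlim.congr' ?_
    filter_upwards [eventually_ne_atTop 0] with n hn
    exact (cpow_mul_poch_div_poch_eq (fun k => (hxy k).1) (fun k => (hxy k).2) hz hw hn).symm

noncomputable def gaussTerm (a b c : ℂ) (n : ℕ) : ℂ :=
  poch a n * poch b n / (poch c n * n !)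

lemma gaussTerm_zero (a b c : ℂ) : gaussTerm a b c 0 = 1 := by simp [gaussTerm, poch_zero]

lemma isBigO_gaussTerm_succ {a b c : ℂ} (hc : ∀ k : ℕ, c ≠ -k) (h : 0 < (c - a - b).re) :
    (fun n : ℕ => gaussTerm a b c (n + 1)) =O[atTop]
      fun n : ℕ => (n : ℝ) ^ (-((c - a - b).re + 1)) := by
  have hre : (-(c + 1 - a - b)).re = -((c - a - b).re + 1) := by simp; ring
  have hlim := tendsto_cpow_mul_poch_div_poch (x := a) (y := b) hc
    (ne_neg_natCast_of_re_pos (z := 1) (by simp))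
  have hO := (isBigO_refl (fun n : ℕ => (n : ℂ) ^ (-(c + 1 - a - b))) atTop).mul (hlim.isBigO_one ℂ)
  refine (hO.congr' ?_ .rfl).trans (.of_norm_left (.of_bound' (.of_forall fun n => ?_)))
  · filter_upwards [eventually_ne_atTop 0] with n hn
    rw [← mul_assoc, ← cpow_add _ _ (Nat.cast_ne_zero.mpr hn), neg_add_cancel, cpow_zero, one_mul,
      gaussTerm, factorial_eq_poch_one]
  · rw [mul_one, norm_natCast_cpow_of_re_ne_zero _ (by linarith), hre, Real.norm_eq_abs,
      abs_of_nonneg (by positivity)]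

lemma summable_norm_gaussTerm {a b c : ℂ} (hc : ∀ k : ℕ, c ≠ -k) (h : 0 < (c - a - b).re) :
    Summable fun n => ‖gaussTerm a b c n‖ :=
  (summable_nat_add_iff 1).mp <| summable_of_isBigO_nat
    (Real.summable_nat_rpow.mpr (by linarith)) (isBigO_gaussTerm_succ hc h).norm_left

lemma tendsto_gaussTerm_mul_natCast {a b c : ℂ} (hc : ∀ k : ℕ, c ≠ -k)
    (h : 0 < (c - a - b).re) :
    Tendsto (fun n : ℕ => gaussTerm a b c n * n) atTop (𝓝 0) := by
  rw [← tendsto_add_atTop_iff_nat 1]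
  have hsucc : (fun n : ℕ => ((n + 1 : ℕ) : ℂ)) =O[atTop] fun n : ℕ => (n : ℝ) :=
    .of_bound 2 <| by
      filter_upwards [eventually_ge_atTop 1] with n hn
      have : (1 : ℝ) ≤ n := by exact_mod_cast hn
      rw [Complex.norm_natCast, Real.norm_natCast]; push_cast; linarith
  refine ((isBigO_gaussTerm_succ hc h).mul hsucc).trans_tendsto ?_
  have hlim := (tendsto_rpow_neg_atTop h).comp tendsto_natCast_atTop_atTop
  refine hlim.congr' ?_
  filter_upwards [eventually_gt_atTop 0] with n hn
  have hn' : (0 : ℝ) < n := by exact_mod_cast hn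
  simp only [Function.comp_apply]
  rw [neg_add, Real.rpow_add hn', Real.rpow_neg_one, inv_mul_cancel_right₀ hn'.ne']

lemma gaussTerm_contiguous {a b c : ℂ} (hc : ∀ k : ℕ, c ≠ -k) (n : ℕ) :
    c * (c - a - b) * gaussTerm a b c n - (c - a) * (c - b) * gaussTerm a b (c + 1) n
      = c * (gaussTerm a b c n * n) - c * (gaussTerm a b c (n + 1) * (n + 1 : ℕ)) := by
  have hc0 : c ≠ 0 := by simpa using hc 0
  have hcn : c + n ≠ 0 := fun h => hc n (by linear_combination h)
  have hpoch : poch (c + 1) n = poch c n * (c + n) / c := by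
    rw [eq_div_iff hc0, mul_comm, ← poch_succ', poch_succ]
  have hpc := poch_ne_zero hc n
  simp only [gaussTerm, poch_succ, hpoch, Nat.factorial_succ]
  push_cast
  field_simp
  ring

lemma summable_gaussTerm {a b c : ℂ} (hc : ∀ k : ℕ, c ≠ -k) (h : 0 < (c - a - b).re) :
    Summable (gaussTerm a b c) :=
  (summable_norm_gaussTerm hc h).of_norm

lemma tsum_gaussTerm_contiguous {a b c : ℂ} (hc : ∀ k : ℕ, c ≠ -k) (h : 0 < (c - a - b).re) :
    c * (c - a - b) * ∑' n, gaussTerm a b c n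
      = (c - a) * (c - b) * ∑' n, gaussTerm a b (c + 1) n := by
  have hc1 : ∀ k : ℕ, c + 1 ≠ -k := by simpa using add_natCast_ne_neg_natCast hc 1
  have h1 : 0 < (c + 1 - a - b).re := by
    simp only [sub_re, add_re, one_re] at h ⊢; linarith
  have hs := summable_gaussTerm hc h
  have hs1 := summable_gaussTerm hc1 h1
  have htel := tsum_eq_of_eq_sub_succ ((hs.mul_left _).sub (hs1.mul_left _))
    (gaussTerm_contiguous hc) (by simpa using (tendsto_gaussTerm_mul_natCast hc h).const_mul c)
  rw [Summable.tsum_sub (hs.mul_left _) (hs1.mul_left _), tsum_mul_left, tsum_mul_left] at htel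
  simpa [sub_eq_zero] using htel

lemma poch_mul_poch_mul_tsum_gaussTerm {a b c : ℂ} (hc : ∀ k : ℕ, c ≠ -k)
    (h : 0 < (c - a - b).re) (m : ℕ) :
    poch c m * poch (c - a - b) m * ∑' n, gaussTerm a b c n
      = poch (c - a) m * poch (c - b) m * ∑' n, gaussTerm a b (c + m) n := by
  induction m with
  | zero => simp [poch_zero]
  | succ m ih =>
    have hm : 0 < (c + m - a - b).re := by rw [re_add_natCast_sub_sub]; positivity
    have hcont := tsum_gaussTerm_contiguous (add_natCast_ne_neg_natCast hc m) hm
    rw [Nat.cast_succ, ← add_assoc, poch_succ, poch_succ, poch_succ, poch_succ]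
    linear_combination (c + m) * (c - a - b + m) * ih + poch (c - a) m * poch (c - b) m * hcont

lemma norm_poch_le_norm_poch {x y : ℂ} (h : ∀ j : ℕ, ‖x + j‖ ≤ ‖y + j‖) (n : ℕ) :
    ‖poch x n‖ ≤ ‖poch y n‖ := by
  rw [poch_eq_prod, poch_eq_prod, norm_prod, norm_prod]
  exact prod_le_prod (fun _ _ => norm_nonneg _) fun j _ => h j

lemma norm_ofReal_add_natCast {r : ℝ} (hr : 0 ≤ r) (j : ℕ) : ‖(r : ℂ) + j‖ = r + j := by
  rw [← ofReal_natCast, ← ofReal_add, Complex.norm_of_nonneg (by positivity)]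

lemma norm_gaussTerm_le {a b c : ℂ} {ρ : ℝ} (hρ : 0 < ρ) (hρc : ρ ≤ c.re) (n : ℕ) :
    ‖gaussTerm a b c n‖ ≤ ‖gaussTerm ‖a‖ ‖b‖ ρ n‖ := by
  have hnum {z : ℂ} : ‖poch z n‖ ≤ ‖poch ‖z‖ n‖ := norm_poch_le_norm_poch (fun j => by
    rw [norm_ofReal_add_natCast (norm_nonneg z)]
    exact (norm_add_le _ _).trans_eq (by rw [norm_natCast])) n
  have hden : ‖poch ρ n‖ ≤ ‖poch c n‖ := norm_poch_le_norm_poch (fun j => by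
    rw [norm_ofReal_add_natCast hρ.le]
    exact (by simpa using hρc : ρ + j ≤ (c + j).re).trans (re_le_norm _)) n
  have hρn : 0 < ‖poch ρ n‖ :=
    norm_pos_iff.mpr (poch_ne_zero (ne_neg_natCast_of_re_pos (by simpa)) n)
  simp only [gaussTerm, norm_div, norm_mul, norm_natCast]
  gcongr <;> exact hnum

lemma tendsto_gaussTerm_add_natCast (a b c : ℂ) {n : ℕ} (hn : n ≠ 0) :
    Tendsto (fun m : ℕ => gaussTerm a b (c + m) n) atTop (𝓝 0) := by
  have hnorm : Tendsto (fun m : ℕ => ‖c + m‖) atTop atTop :=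
    tendsto_atTop_mono (fun m => by simpa using re_le_norm (c + m))
      (tendsto_atTop_add_const_left _ _ tendsto_natCast_atTop_atTop)
  have hpoch : Tendsto (fun m : ℕ => ‖poch (c + m) n‖) atTop atTop :=
    Polynomial.tendsto_norm_atTop _ (Polynomial.natDegree_pos_iff_degree_pos.mp
      (by rwa [ascPochhammer_natDegree, Nat.pos_iff_ne_zero])) hnorm
  rw [tendsto_zero_iff_norm_tendsto_zero]
  have hlim := hpoch.inv_tendsto_atTop.const_mul (‖poch a n‖ * ‖poch b n‖ / n !)
  rw [mul_zero] at hlim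
  refine hlim.congr fun m => ?_
  simp only [gaussTerm, norm_div, norm_mul, norm_natCast, Pi.inv_apply]
  ring

lemma tendsto_tsum_gaussTerm_add_natCast (a b c : ℂ) :
    Tendsto (fun m : ℕ => ∑' n, gaussTerm a b (c + m) n) atTop (𝓝 1) := by
  set ρ : ℝ := ‖a‖ + ‖b‖ + 1
  have hρ : 0 < ρ := by positivity
  have hbound := summable_norm_gaussTerm (a := ‖a‖) (b := ‖b‖) (c := ρ)
    (ne_neg_natCast_of_re_pos (by simpa)) (by simp [ρ]; linarith)
  have hlim : ∀ n : ℕ, Tendsto (fun m : ℕ => gaussTerm a b (c + m) n) atTop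
      (𝓝 (if n = 0 then 1 else 0)) := by
    rintro (_ | n)
    · simp [gaussTerm_zero]
    · simpa using tendsto_gaussTerm_add_natCast a b c n.succ_ne_zero
  have hdom : ∀ᶠ m : ℕ in atTop, ∀ n, ‖gaussTerm a b (c + m) n‖ ≤ ‖gaussTerm ‖a‖ ‖b‖ ρ n‖ := by
    filter_upwards [eventually_ge_atTop ⌈ρ - c.re⌉₊] with m hm n
    exact norm_gaussTerm_le hρ (by simpa [add_comm] using (Nat.ceil_le.mp hm)) n
  simpa using tendsto_tsum_of_dominated_convergence hbound hlim hdom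

/-- Gauss summation theorem: if `c` is not a nonpositive integer and
`Re (c - a - b) > 0`, then `∑ (a)_n (b)_n / ((c)_n n!)` converges absolutely
with sum `Γ(c) Γ(c-a-b) / (Γ(c-a) Γ(c-b))`. -/
theorem gauss_summation (a b c : ℂ) (hc : ∀ m : ℕ, c ≠ -(m : ℂ))
    (h : 0 < (c - a - b).re) :
    Summable (fun n : ℕ =>
      ‖poch a n * poch b n / (poch c n * (n.factorial : ℂ))‖) ∧
    ∑' n : ℕ, poch a n * poch b n / (poch c n * (n.factorial : ℂ)) =
      Complex.Gamma c * Complex.Gamma (c - a - b) /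
        (Complex.Gamma (c - a) * Complex.Gamma (c - b)) := by
  refine ⟨summable_norm_gaussTerm hc h, ?_⟩
  have hcab := ne_neg_natCast_of_re_pos h
  have hratio : Tendsto (fun m => poch (c - a) m * poch (c - b) m / (poch c m * poch (c - a - b) m))
      atTop (𝓝 (Gamma c * Gamma (c - a - b) / (Gamma (c - a) * Gamma (c - b)))) := by
    rw [← tendsto_add_atTop_iff_nat 1]
    have hexp : c + (c - a - b) - (c - a) - (c - b) = 0 := by ring
    simpa only [hexp, cpow_zero, one_mul] using
      tendsto_cpow_mul_poch_div_poch (x := c - a) (y := c - b) hc hcab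
  have hsum (m : ℕ) : poch (c - a) m * poch (c - b) m / (poch c m * poch (c - a - b) m) *
      ∑' n, gaussTerm a b (c + m) n = ∑' n, gaussTerm a b c n := by
    rw [div_mul_eq_mul_div, ← poch_mul_poch_mul_tsum_gaussTerm hc h m,
      mul_div_cancel_left₀ _ (mul_ne_zero (poch_ne_zero hc m) (poch_ne_zero hcab m))]
  have hlim := hratio.mul (tendsto_tsum_gaussTerm_add_natCast a b c)
  rw [mul_one] at hlim
  exact tendsto_nhds_unique (tendsto_const_nhds.congr fun m => (hsum m).symm) hlim
end
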